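/- arXiv:0903.3487 — 3 statements merged into one kernel-verified Lean document; each statement's English description precedes it below -/
import Mathlib

section
/- Low-SNR minimizer of the lower bound (Remark 2, first part): Let σ²>0, ρ∈[0,1), P,N>0 with P/N ≤ ρ²/(2(1-ρ)(1+2ρ)). Then for every ρ̂∈[0,1], max{ξ(σ²,ρ,P,N,1), ψ(σ²,ρ,P,N,1)} ≤ max{ξ(σ²,ρ,P,N,ρ̂), ψ(σ²,ρ,P,N,ρ̂)}; that is, the minimum over ρ̂∈[0,1] of max{ξ,ψ} is achieved at ρ̂=1. -/
open Classical in
/-- The function ξ(σ², ρ, P, N, ρ̂); the case distinction `P/N ≤ ρ/(1-ρ²)` is written in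
the equivalent product form `P(1-ρ²) ≤ Nρ`. -/
noncomputable def xiFn (σsq ρ P N ρh : ℝ) : ℝ :=
  if P * (1 - ρ ^ 2) ≤ N * ρ then
    (1 / 2) * (N * σsq * (1 + ρ) / (N + 2 * P * (1 + ρh)) + σsq * (1 - ρ))
  else σsq * Real.sqrt (N * (1 - ρ ^ 2) / (N + 2 * P * (1 + ρh)))

/-- The function ψ(σ², ρ, P, N, ρ̂). -/
noncomputable def psiFn (σsq ρ P N ρh : ℝ) : ℝ :=
  σsq * N * (1 - ρ ^ 2) / (N + P * (1 - ρh ^ 2))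

/-! Under the low-SNR condition `2P(1-ρ)(1+2ρ) ≤ Nρ²` the first branch of ξ is active, and there
ξ is decreasing in ρ̂, so `ξ(ρ̂) ≥ ξ(1)`. Clearing denominators, `ψ(1) = σ²(1-ρ²) ≤ ξ(1)` is the
same condition again. Hence `max(ξ,ψ)(1) = ξ(1) ≤ ξ(ρ̂) ≤ max(ξ,ψ)(ρ̂)`. -/

variable {σsq ρ P N : ℝ}

theorem mul_one_sub_sq_le_of_low_snr (hρ0 : 0 ≤ ρ) (hρ1 : ρ ≤ 1) (hP : 0 ≤ P) (hN : 0 ≤ N)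
    (hsnr : 2 * P * (1 - ρ) * (1 + 2 * ρ) ≤ N * ρ ^ 2) :
    P * (1 - ρ ^ 2) ≤ N * ρ := by
  have hρsq : N * ρ ^ 2 ≤ N * ρ := mul_le_mul_of_nonneg_left (by nlinarith) hN
  have : P * (1 - ρ ^ 2) ≤ 2 * P * (1 - ρ) * (1 + 2 * ρ) := by
    nlinarith [mul_nonneg (mul_nonneg hP (sub_nonneg.2 hρ1)) (by linarith : (0 : ℝ) ≤ 1 + 3 * ρ)]
  linarith

theorem xiFn_of_le (h : P * (1 - ρ ^ 2) ≤ N * ρ) (ρh : ℝ) :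
    xiFn σsq ρ P N ρh =
      (1 / 2) * (N * σsq * (1 + ρ) / (N + 2 * P * (1 + ρh)) + σsq * (1 - ρ)) :=
  if_pos h

theorem xiFn_antitoneOn (hσ : 0 ≤ σsq) (hρ0 : 0 ≤ ρ) (hP : 0 ≤ P) (hN : 0 < N)
    (h : P * (1 - ρ ^ 2) ≤ N * ρ) :
    AntitoneOn (xiFn σsq ρ P N) (Set.Ici (-1)) := by
  intro a ha b _ hab
  simp only [xiFn_of_le h]
  have hden : 0 < N + 2 * P * (1 + a) := by nlinarith [Set.mem_Ici.1 ha]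
  gcongr

theorem psiFn_one (hN : N ≠ 0) : psiFn σsq ρ P N 1 = σsq * (1 - ρ ^ 2) := by
  simp only [psiFn, one_pow, sub_self, mul_zero, add_zero]
  field_simp

theorem psiFn_one_le_xiFn_one (hσ : 0 ≤ σsq) (hP : 0 ≤ P) (hN : 0 < N)
    (hsnr : 2 * P * (1 - ρ) * (1 + 2 * ρ) ≤ N * ρ ^ 2) (h : P * (1 - ρ ^ 2) ≤ N * ρ) :
    psiFn σsq ρ P N 1 ≤ xiFn σsq ρ P N 1 := by
  have hden : 0 < N + 2 * P * (1 + 1) := by positivity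
  rw [psiFn_one hN.ne', xiFn_of_le h, div_add' _ _ _ hden.ne', mul_div_assoc', le_div_iff₀ hden]
  nlinarith

/-- **Remark 2, first part (low-SNR minimizer of the lower bound).**
If `P/N ≤ ρ²/(2(1-ρ)(1+2ρ))`, then the minimum over `ρ̂ ∈ [0,1]` of
`max{ξ(σ²,ρ,P,N,ρ̂), ψ(σ²,ρ,P,N,ρ̂)}` is achieved at `ρ̂ = 1`. -/
theorem lowSNR_minimizer_at_one
    (σsq ρ P N : ℝ)
    (hσ : 0 < σsq) (hρ0 : 0 ≤ ρ) (hρ1 : ρ < 1)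
    (hP : 0 < P) (hN : 0 < N)
    (hsnr : P / N ≤ ρ ^ 2 / (2 * (1 - ρ) * (1 + 2 * ρ))) :
    ∀ ρh ∈ Set.Icc (0 : ℝ) 1,
      max (xiFn σsq ρ P N 1) (psiFn σsq ρ P N 1) ≤
        max (xiFn σsq ρ P N ρh) (psiFn σsq ρ P N ρh) := by
  rintro ρh ⟨hρh0, hρh1⟩
  have hsnr' : 2 * P * (1 - ρ) * (1 + 2 * ρ) ≤ N * ρ ^ 2 := by
    rw [div_le_div_iff₀ hN (by nlinarith)] at hsnr
    linarith
  have hbranch := mul_one_sub_sq_le_of_low_snr hρ0 hρ1.le hP.le hN.le hsnr'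
  have hξ : xiFn σsq ρ P N 1 ≤ xiFn σsq ρ P N ρh :=
    xiFn_antitoneOn hσ.le hρ0 hP.le hN hbranch (Set.mem_Ici.2 (by linarith))
      (Set.mem_Ici.2 (by norm_num)) hρh1
  calc max (xiFn σsq ρ P N 1) (psiFn σsq ρ P N 1) = xiFn σsq ρ P N 1 :=
        max_eq_left (psiFn_one_le_xiFn_one hσ.le hP.le hN hsnr' hbranch)
    _ ≤ max (xiFn σsq ρ P N ρh) (psiFn σsq ρ P N ρh) := hξ.trans (le_max_left _ _)
end

section
/- High-SNR behavior of the lower bound (Remark 2, second part): Let σ²>0, ρ∈[0,1), N>0. Then liminf as P→∞ of √(P/N)·(inf over ρ̂∈[0,1] of max{ξ(σ²,ρ,P,N,ρ̂), ψ(σ²,ρ,P,N,ρ̂)}) ≥ σ²·√((1-ρ²)/4). -/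
/-!
For `P` beyond the threshold `Nρ/(1-ρ²)`, ξ is the square-root branch, which is decreasing in ρ̂,
so every `max {ξ, ψ}` is at least `ξ(…, 1) = σ² √(N(1-ρ²)/(N+4P))`. Multiplied by `√(P/N)` this
is `σ² √(P(1-ρ²)/(N+4P)) → σ² √((1-ρ²)/4)`. Since `liminf` on `ℝ` needs the function to be
bounded above, we also evaluate at `ρ̂ = 0`, where both `√(P/N) ξ` and `√(P/N) ψ` stay bounded.
-/

open Filter Topology Set

noncomputable def lowerBound (σsq ρ P N : ℝ) : ℝ :=
  sInf ((fun ρh => max (xiFn σsq ρ P N ρh) (psiFn σsq ρ P N ρh)) '' Icc 0 1)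

lemma tendsto_mul_div_add_mul_atTop (a N : ℝ) {c : ℝ} (hc : c ≠ 0) :
    Tendsto (fun P : ℝ => P * a / (N + c * P)) atTop (𝓝 (a / c)) := by
  have hden : Tendsto (fun P : ℝ => N / P + c) atTop (𝓝 c) := by
    simpa using (tendsto_const_nhds.div_atTop tendsto_id).add_const c
  refine (tendsto_const_nhds.div hden hc).congr' ?_
  filter_upwards [eventually_gt_atTop 0] with P hP
  change a / (N / P + c) = _
  rw [div_add' _ _ _ hP.ne', div_div_eq_mul_div]
  ring

lemma sqrt_div_mul_sqrt_mul_div {P N : ℝ} (hP : 0 ≤ P) (hN : 0 < N) (a x : ℝ) :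
    √(P / N) * √(N * a / x) = √(P * a / x) := by
  rw [← Real.sqrt_mul (div_nonneg hP hN.le)]
  congr 1
  field_simp

section LargeP

variable {σsq ρ P N : ℝ}

lemma xiFn_of_lt (ρh : ℝ) (hP : N * ρ < P * (1 - ρ ^ 2)) :
    xiFn σsq ρ P N ρh = σsq * √(N * (1 - ρ ^ 2) / (N + 2 * P * (1 + ρh))) :=
  if_neg hP.not_ge

lemma le_xiFn_of_lt {ρh : ℝ} (hσ : 0 ≤ σsq) (hρ : 0 ≤ 1 - ρ ^ 2) (hN : 0 < N) (hP0 : 0 ≤ P)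
    (hP : N * ρ < P * (1 - ρ ^ 2)) (hρh : ρh ∈ Icc 0 1) :
    σsq * √(N * (1 - ρ ^ 2) / (N + 4 * P)) ≤ xiFn σsq ρ P N ρh := by
  rw [xiFn_of_lt ρh hP]
  refine mul_le_mul_of_nonneg_left (Real.sqrt_le_sqrt ?_) hσ
  exact div_le_div_of_nonneg_left (by positivity) (by nlinarith [hρh.1]) (by nlinarith [hρh.2])

lemma le_lowerBound_of_lt (hσ : 0 ≤ σsq) (hρ : 0 ≤ 1 - ρ ^ 2) (hN : 0 < N) (hP0 : 0 ≤ P)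
    (hP : N * ρ < P * (1 - ρ ^ 2)) :
    σsq * √(N * (1 - ρ ^ 2) / (N + 4 * P)) ≤ lowerBound σsq ρ P N := by
  refine le_csInf ((nonempty_Icc.2 zero_le_one).image _) ?_
  rintro _ ⟨ρh, hρh, rfl⟩
  exact (le_xiFn_of_lt hσ hρ hN hP0 hP hρh).trans (le_max_left _ _)

lemma lowerBound_le_of_lt (hσ : 0 ≤ σsq) (hρ : 0 ≤ 1 - ρ ^ 2) (hN : 0 < N) (hP0 : 0 ≤ P)
    (hP : N * ρ < P * (1 - ρ ^ 2)) :
    lowerBound σsq ρ P N ≤ max (xiFn σsq ρ P N 0) (psiFn σsq ρ P N 0) := by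
  refine csInf_le ⟨σsq * √(N * (1 - ρ ^ 2) / (N + 4 * P)), ?_⟩
    ⟨0, left_mem_Icc.2 zero_le_one, rfl⟩
  rintro _ ⟨ρh, hρh, rfl⟩
  exact (le_xiFn_of_lt hσ hρ hN hP0 hP hρh).trans (le_max_left _ _)

lemma sqrt_div_mul_xiFn_zero_le (hσ : 0 ≤ σsq) (hρ : 0 ≤ 1 - ρ ^ 2) (hN : 0 < N)
    (hP0 : 0 ≤ P) (hP : N * ρ < P * (1 - ρ ^ 2)) :
    √(P / N) * xiFn σsq ρ P N 0 ≤ σsq * √(1 - ρ ^ 2) := by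
  rw [xiFn_of_lt 0 hP, mul_left_comm, sqrt_div_mul_sqrt_mul_div hP0 hN]
  gcongr
  rw [div_le_iff₀ (by positivity)]
  nlinarith

end LargeP

lemma sqrt_div_mul_psiFn_zero_le {σsq ρ P N : ℝ} (hσ : 0 ≤ σsq) (hρ : 0 ≤ 1 - ρ ^ 2)
    (hN : 0 < N) (hP0 : 0 ≤ P) :
    √(P / N) * psiFn σsq ρ P N 0 ≤ σsq * (1 - ρ ^ 2) := by
  have ht : √(P / N) ^ 2 * N = P := by
    rw [Real.sq_sqrt (div_nonneg hP0 hN.le)]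
    field_simp
  -- `t N ≤ N + t² N` with `t = √(P/N)`, since `t ≤ 1 + t²`
  have hkey : √(P / N) * N ≤ N + P := by
    nlinarith [sq_nonneg (√(P / N) - 1), Real.sqrt_nonneg (P / N)]
  rw [psiFn, ← mul_div_assoc, div_le_iff₀ (by positivity)]
  calc √(P / N) * (σsq * N * (1 - ρ ^ 2)) = σsq * (1 - ρ ^ 2) * (√(P / N) * N) := by ring
    _ ≤ σsq * (1 - ρ ^ 2) * (N + P) := by gcongr
    _ = σsq * (1 - ρ ^ 2) * (N + P * (1 - 0 ^ 2)) := by ring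

/-- **Remark 2, second part (high-SNR behaviour of the lower bound).**
`liminf_{P→∞} √(P/N) · inf_{ρ̂∈[0,1]} max{ξ, ψ} ≥ σ²·√((1-ρ²)/4)`. -/
theorem highSNR_lower_bound_asymptotics
    (σsq ρ N : ℝ)
    (hσ : 0 < σsq) (hρ0 : 0 ≤ ρ) (hρ1 : ρ < 1) (hN : 0 < N) :
    σsq * Real.sqrt ((1 - ρ ^ 2) / 4) ≤
      Filter.liminf (fun P : ℝ =>
        Real.sqrt (P / N) *
          sInf ((fun ρh => max (xiFn σsq ρ P N ρh) (psiFn σsq ρ P N ρh)) '' Set.Icc 0 1))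
        Filter.atTop := by
  have hρ : 0 < 1 - ρ ^ 2 := by nlinarith
  have hlarge : ∀ᶠ P in atTop, 0 ≤ P ∧ N * ρ < P * (1 - ρ ^ 2) :=
    (eventually_ge_atTop 0).and <| (eventually_gt_atTop (N * ρ / (1 - ρ ^ 2))).mono
      fun P hP => (div_lt_iff₀ hρ).1 hP
  have hlim : Tendsto (fun P => σsq * √(P * (1 - ρ ^ 2) / (N + 4 * P))) atTop
      (𝓝 (σsq * √((1 - ρ ^ 2) / 4))) :=
    ((tendsto_mul_div_add_mul_atTop _ N four_ne_zero).sqrt).const_mul σsq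
  have hlower : ∀ᶠ P in atTop,
      σsq * √(P * (1 - ρ ^ 2) / (N + 4 * P)) ≤ √(P / N) * lowerBound σsq ρ P N :=
    hlarge.mono fun P ⟨hP0, hP⟩ => by
      rw [← sqrt_div_mul_sqrt_mul_div hP0 hN, mul_left_comm]
      exact mul_le_mul_of_nonneg_left (le_lowerBound_of_lt hσ.le hρ.le hN hP0 hP)
        (Real.sqrt_nonneg _)
  have hupper : ∀ᶠ P in atTop,
      √(P / N) * lowerBound σsq ρ P N ≤ max (σsq * √(1 - ρ ^ 2)) (σsq * (1 - ρ ^ 2)) :=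
    hlarge.mono fun P ⟨hP0, hP⟩ => calc
      _ ≤ √(P / N) * max (xiFn σsq ρ P N 0) (psiFn σsq ρ P N 0) :=
        mul_le_mul_of_nonneg_left (lowerBound_le_of_lt hσ.le hρ.le hN hP0 hP) (Real.sqrt_nonneg _)
      _ = max (√(P / N) * xiFn σsq ρ P N 0) (√(P / N) * psiFn σsq ρ P N 0) :=
        mul_max_of_nonneg _ _ (Real.sqrt_nonneg _)
      _ ≤ _ := max_le_max (sqrt_div_mul_xiFn_zero_le hσ.le hρ.le hN hP0 hP)
        (sqrt_div_mul_psiFn_zero_le hσ.le hρ.le hN hP0)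
  calc σsq * √((1 - ρ ^ 2) / 4) = liminf _ atTop := hlim.liminf_eq.symm
    _ ≤ _ := liminf_le_liminf hlower hlim.isBoundedUnder_ge
      (isCoboundedUnder_ge_of_eventually_le _ hupper)
end

section
/- Nonnegativity of the estimator coefficients (Lemma 4): Let σ²>0, ρ∈(0,1], and let (D1,D2) ∈ 𝒟3 with 0<D1<σ² and 0<D2. Define α = σ²(√(σ²−D1) − ρ√(σ²−D2))/(D2·√(σ²−D1)) and β = (√((σ²−D1)(σ²−D2)) − ρ(σ²−D2))/D2. Then α ≥ 0 and ρ − β ≥ 0. -/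
/-- Region 𝒟₃ of distortion pairs. -/
def regD3 (σsq ρ : ℝ) : Set (ℝ × ℝ) :=
  {p | (0 ≤ p.1 ∧ p.1 ≤ σsq * (1 - ρ ^ 2) ∧
        (σsq * (1 - ρ ^ 2) - p.1) * σsq / (σsq - p.1) ≤ p.2 ∧
        p.2 < σsq * (1 - ρ ^ 2) + ρ ^ 2 * p.1) ∨
       (σsq * (1 - ρ ^ 2) < p.1 ∧ p.1 ≤ σsq ∧
        (p.1 - σsq * (1 - ρ ^ 2)) / ρ ^ 2 < p.2 ∧ p.2 < σsq * (1 - ρ ^ 2) + ρ ^ 2 * p.1)}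

/-!
With `a = σ² - D1` and `b = σ² - D2`, membership in `𝒟₃` yields the two inequalities
`ρ² b ≤ a` and `a b ≤ ρ² σ⁴`. Taking square roots, the first says `ρ √b ≤ √a`, which is `α ≥ 0`;
the second says `√(a b) ≤ ρ σ² = ρ (D2 + b)`, which is `ρ - β ≥ 0`.
-/

lemma mul_sqrt_le_sqrt {ρ a b : ℝ} (hρ : 0 ≤ ρ) (h : ρ ^ 2 * b ≤ a) : ρ * √b ≤ √a := by
  rw [← Real.sqrt_sq hρ, ← Real.sqrt_mul (sq_nonneg ρ)]
  exact Real.sqrt_le_sqrt h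

lemma sqrt_le_mul_of_le_sq_mul_sq {ρ s x : ℝ} (hρ : 0 ≤ ρ) (hs : 0 ≤ s)
    (h : x ≤ ρ ^ 2 * s ^ 2) : √x ≤ ρ * s := by
  rw [← mul_pow] at h
  exact Real.sqrt_le_iff.mpr ⟨mul_nonneg hρ hs, h⟩

lemma bounds_of_mem_regD3 {σsq ρ D1 D2 : ℝ} (hρ : 0 < ρ) (hmem : (D1, D2) ∈ regD3 σsq ρ)
    (hD1 : D1 < σsq) (hD2 : 0 < D2) :
    ρ ^ 2 * (σsq - D2) ≤ σsq - D1 ∧ (σsq - D1) * (σsq - D2) ≤ ρ ^ 2 * σsq ^ 2 := by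
  have ha : 0 < σsq - D1 := by linarith
  rcases hmem with ⟨-, hsmall, hlower, -⟩ | ⟨hlarge, -, hlower, -⟩
  · rw [div_le_iff₀ ha] at hlower
    exact ⟨by nlinarith, by nlinarith⟩
  · rw [div_lt_iff₀ (by positivity)] at hlower
    have h1 : ρ ^ 2 * (σsq - D2) ≤ σsq - D1 := by linarith
    refine ⟨h1, ?_⟩
    -- `a b ≤ a² / ρ² ≤ ρ² σ⁴`, the last step because `a < ρ² σ²` in this part of `𝒟₃`
    nlinarith [mul_le_mul_of_nonneg_left h1 ha.le]

theorem estimator_coefficients_nonneg_general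
    (σsq ρ D1 D2 : ℝ)
    (hσ : 0 < σsq) (hρ0 : 0 < ρ)
    (hmem : (D1, D2) ∈ regD3 σsq ρ)
    (hD1' : D1 < σsq) (hD2 : 0 < D2) :
    0 ≤ σsq * (Real.sqrt (σsq - D1) - ρ * Real.sqrt (σsq - D2)) /
        (D2 * Real.sqrt (σsq - D1)) ∧
    0 ≤ ρ - (Real.sqrt ((σsq - D1) * (σsq - D2)) - ρ * (σsq - D2)) / D2 := by
  obtain ⟨h1, h2⟩ := bounds_of_mem_regD3 hρ0 hmem hD1' hD2
  constructor
  · have := mul_sqrt_le_sqrt hρ0.le h1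
    exact div_nonneg (mul_nonneg hσ.le (by linarith)) (by positivity)
  · have := sqrt_le_mul_of_le_sq_mul_sq hρ0.le hσ.le h2
    rw [sub_nonneg, div_le_iff₀ hD2]
    linarith

/-- **Lemma 4 (nonnegativity of the estimator coefficients).**
For `(D1, D2) ∈ 𝒟₃`, the coefficients
`α = σ²(√(σ²−D1) − ρ√(σ²−D2))/(D2·√(σ²−D1))` and
`β = (√((σ²−D1)(σ²−D2)) − ρ(σ²−D2))/D2` satisfy `α ≥ 0` and `ρ − β ≥ 0`. -/
theorem estimator_coefficients_nonneg
    (σsq ρ D1 D2 : ℝ)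
    (hσ : 0 < σsq) (hρ0 : 0 < ρ) (hρ1 : ρ ≤ 1)
    (hmem : (D1, D2) ∈ regD3 σsq ρ)
    (hD1 : 0 < D1) (hD1' : D1 < σsq) (hD2 : 0 < D2) :
    0 ≤ σsq * (Real.sqrt (σsq - D1) - ρ * Real.sqrt (σsq - D2)) /
        (D2 * Real.sqrt (σsq - D1)) ∧
    0 ≤ ρ - (Real.sqrt ((σsq - D1) * (σsq - D2)) - ρ * (σsq - D2)) / D2 :=
  estimator_coefficients_nonneg_general σsq ρ D1 D2 hσ hρ0 hmem hD1' hD2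
end
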